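/- arXiv:1810.04378 — 6 statements merged into one kernel-verified Lean document; each statement's English description precedes it below -/
import Mathlib

section
/- Let ε ∈ {2,3} be prime, F = ℤ/εℤ, and A' = F[q,q⁻¹]. For q-integers defined by [n]_{q^i} = (q^{in} - q^{-in})/(q^i - q^{-i}), one has ([a]!_{q})^{ε} = [a]!_{q^{ε}} in A' for every natural number a, where [a]!_{q^i} = ∏_{k=1}^{a} [k]_{q^i}. -/
/-!
Over a ring of characteristic `p`, Frobenius is a ring endomorphism, so raising
`(q^i - q^{-i}) [n]_{q^i} = q^{in} - q^{-in}` to the `p`-th power gives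
`(q^{pi} - q^{-pi}) ([n]_{q^i})^p = q^{pin} - q^{-pin}`. Cancelling the nonzero factor
`q^{pi} - q^{-pi}` in the domain `F[q,q⁻¹]` yields `([n]_{q^i})^p = [n]_{q^{pi}}`, and the
factorial identity is the product of these.
-/

open LaurentPolynomial

namespace LaurentPolynomial

variable {R : Type*} [CommRing R]

instance charP (p : ℕ) [CharP R p] : CharP R[T;T⁻¹] p :=
  charP_of_injective_ringHom Polynomial.toLaurent_injective p

theorem T_injective [Nontrivial R] : Function.Injective (T : ℤ → R[T;T⁻¹]) :=
  fun _ _ h => AddMonoidAlgebra.single_left_injective one_ne_zero h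

theorem T_sub_T_neg_ne_zero [Nontrivial R] {i : ℤ} (hi : i ≠ 0) :
    (T i - T (-i) : R[T;T⁻¹]) ≠ 0 := by
  rw [sub_ne_zero]
  intro h
  exact hi (by linarith [T_injective h])

theorem T_sub_T_neg_pow_char (p : ℕ) [Fact p.Prime] [CharP R p] (i : ℤ) :
    (T i - T (-i) : R[T;T⁻¹]) ^ p = T (p * i) - T (-(p * i)) := by
  rw [sub_pow_char, T_pow, T_pow, mul_neg]

theorem pow_char_eq_of_mul_T_sub_T_neg [IsDomain R] (p : ℕ) [Fact p.Prime] [CharP R p]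
    {i : ℤ} (hi : i ≠ 0) (n : ℤ) {x y : R[T;T⁻¹]}
    (hx : (T i - T (-i)) * x = T (i * n) - T (-(i * n)))
    (hy : (T (p * i) - T (-(p * i))) * y = T (p * i * n) - T (-(p * i * n))) :
    x ^ p = y := by
  have hpi : (p : ℤ) * i ≠ 0 := mul_ne_zero (Nat.cast_ne_zero.2 (Fact.out : p.Prime).ne_zero) hi
  apply mul_left_cancel₀ (T_sub_T_neg_ne_zero (R := R) hpi)
  rw [hy, ← T_sub_T_neg_pow_char, ← mul_pow, hx, T_sub_T_neg_pow_char, mul_assoc]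

end LaurentPolynomial

theorem stmt0_general (ε : ℕ) (hp : Nat.Prime ε)
    (qint : ℤ → ℕ → LaurentPolynomial (ZMod ε))
    (hqint : ∀ (i : ℤ) (n : ℕ),
      (T i - T (-i)) * qint i n = T (i * n) - T (-(i * n)))
    (a : ℕ) :
    (∏ k ∈ Finset.range a, qint 1 (k + 1)) ^ ε
      = ∏ k ∈ Finset.range a, qint (ε : ℤ) (k + 1) := by
  have : Fact ε.Prime := ⟨hp⟩
  have frobenius_qint (n : ℕ) : qint 1 n ^ ε = qint ε n := by
    refine pow_char_eq_of_mul_T_sub_T_neg ε one_ne_zero n (hqint 1 n) ?_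
    simpa only [mul_one] using hqint ε n
  rw [← Finset.prod_pow]
  exact Finset.prod_congr rfl fun k _ => frobenius_qint (k + 1)

/-- For ε ∈ {2,3} prime and q-integers `[n]_{q^i}` in
`(ℤ/εℤ)[q,q⁻¹]` (characterized by `(q^i - q^{-i})·[n]_{q^i} = q^{in} - q^{-in}`),
one has `([a]!_q)^ε = [a]!_{q^ε}`. -/
theorem stmt0 (ε : ℕ) (hε : ε = 2 ∨ ε = 3) (hp : Nat.Prime ε)
    (qint : ℤ → ℕ → LaurentPolynomial (ZMod ε))
    (hqint : ∀ (i : ℤ) (n : ℕ),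
      (T i - T (-i)) * qint i n = T (i * n) - T (-(i * n)))
    (a : ℕ) :
    (∏ k ∈ Finset.range a, qint 1 (k + 1)) ^ ε
      = ∏ k ∈ Finset.range a, qint (ε : ℤ) (k + 1) :=
  stmt0_general ε hp qint hqint a
end

section
/- Let X = (I, (·,·)) be a simply laced Cartan datum and σ : I → I an admissible automorphism (i.e., (σ(α_i), σ(α_j)) = (α_i, α_j) for all i,j, and (α_i, α_j) = 0 whenever i ≠ j lie in the same σ-orbit). Define a symmetric bilinear form on ⊕_{η ∈ Ī} ℚα_η, where Ī is the set of σ-orbits, by (α_η, α_η)₁ = 2|η| and, for η ≠ η', (α_η, α_{η'})₁ = −|{(i,j) ∈ η × η' : (α_i, α_j) ≠ 0}|. Then (Ī, (·,·)₁) is a Cartan datum: (α_η, α_η)₁ ∈ 2ℤ_{>0} for all η, and 2(α_η, α_{η'})₁/(α_η, α_η)₁ ∈ ℤ_{≤0} for η ≠ η'. -/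
/-!
Every `i ∈ η` is joined to the same number `c` of vertices of `η'`: `σ` preserves `B`, maps the
orbit `η'` onto itself, and moves `i` to any other point of `η`. Hence `(α_η, α_η')₁ = -|η| c`
while `(α_η, α_η)₁ = 2|η|`, so the quotient `2 (α_η, α_η')₁ / (α_η, α_η)₁ = -c` is a nonpositive
integer.
-/

def IsOrbit {I : Type*} (σ : Equiv.Perm I) (η : Finset I) : Prop :=
  ∃ i, ∀ j, j ∈ η ↔ ∃ k : ℕ, (σ ^ k) i = j

namespace IsOrbit

variable {I : Type*} {σ : Equiv.Perm I} {η : Finset I}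

theorem nonempty (hη : IsOrbit σ η) : η.Nonempty :=
  let ⟨i, hi⟩ := hη
  ⟨i, (hi i).2 ⟨0, rfl⟩⟩

theorem perm_apply_mem (hη : IsOrbit σ η) {j : I} (hj : j ∈ η) : σ j ∈ η := by
  obtain ⟨i, hi⟩ := hη
  obtain ⟨k, rfl⟩ := (hi j).1 hj
  exact (hi _).2 ⟨k + 1, by rw [pow_succ', Equiv.Perm.mul_apply]⟩

theorem perm_apply_mem_iff (hη : IsOrbit σ η) (j : I) : σ j ∈ η ↔ j ∈ η := by
  have hmap : η.map σ.toEmbedding = η :=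
    Finset.map_eq_of_subset fun x hx => by
      obtain ⟨y, hy, rfl⟩ := Finset.mem_map.1 hx
      exact hη.perm_apply_mem hy
  conv_lhs => rw [← hmap]
  rw [Finset.mem_map_equiv, Equiv.symm_apply_apply]

theorem apply_eq_apply_of_invariant {α : Type*} (hη : IsOrbit σ η) {f : I → α}
    (hf : ∀ i, f (σ i) = f i) {j k : I} (hj : j ∈ η) (hk : k ∈ η) : f j = f k := by
  obtain ⟨i, hi⟩ := hη
  have hpow : ∀ n : ℕ, f ((σ ^ n) i) = f i := fun n => by
    induction n with
    | zero => rfl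
    | succ n ih => rw [pow_succ', Equiv.Perm.mul_apply, hf, ih]
  obtain ⟨m, rfl⟩ := (hi j).1 hj
  obtain ⟨n, rfl⟩ := (hi k).1 hk
  rw [hpow, hpow]

end IsOrbit

theorem card_filter_perm_apply {I : Type*} (σ : Equiv.Perm I) {s : Finset I}
    (hs : ∀ j, σ j ∈ s ↔ j ∈ s) (R : I → I → Prop) [DecidableRel R]
    (hR : ∀ i j, R (σ i) (σ j) ↔ R i j) (i : I) :
    (s.filter (R (σ i))).card = (s.filter (R i)).card :=
  Finset.card_nbij' σ.symm σ
    (fun j hj => by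
      rw [Finset.mem_coe, Finset.mem_filter] at hj ⊢
      rwa [← hs, ← hR, Equiv.apply_symm_apply])
    (fun j hj => by
      rw [Finset.mem_coe, Finset.mem_filter] at hj ⊢
      rwa [hs, hR])
    (fun j _ => σ.apply_symm_apply j) (fun j _ => σ.symm_apply_apply j)

theorem card_filter_product_eq_mul {α β : Type*} {s : Finset α} {t : Finset β}
    (R : α → β → Prop) [∀ a, DecidablePred (R a)] {c : ℕ}
    (hc : ∀ a ∈ s, (t.filter (R a)).card = c) :
    ((s ×ˢ t).filter fun p => R p.1 p.2).card = s.card * c := by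
  rw [Finset.card_filter, Finset.sum_product, ← smul_eq_mul, ← Finset.sum_const]
  refine Finset.sum_congr rfl fun a ha => ?_
  rw [← hc a ha, Finset.card_filter]

theorem stmt2_general {I : Type*}
    (B : I → I → ℤ)
    (σ : Equiv.Perm I)
    (hσ : ∀ i j, B (σ i) (σ j) = B i j)
    (B₁ : Finset I → Finset I → ℤ)
    (hB₁diag : ∀ η : Finset I, B₁ η η = 2 * η.card)
    (hB₁off : ∀ η η' : Finset I, η ≠ η' →
      B₁ η η' = -(((η ×ˢ η').filter (fun p => B p.1 p.2 ≠ 0)).card : ℤ))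
    (η η' : Finset I) (hη : IsOrbit σ η) (hη' : IsOrbit σ η') :
    (∃ m : ℤ, 0 < m ∧ B₁ η η = 2 * m) ∧
    (η ≠ η' → ∃ m : ℤ, m ≤ 0 ∧ 2 * B₁ η η' = m * B₁ η η) := by
  obtain ⟨i₀, hi₀η⟩ := hη.nonempty
  refine ⟨⟨η.card, by exact_mod_cast Finset.card_pos.2 ⟨i₀, hi₀η⟩, hB₁diag η⟩, fun hne => ?_⟩
  set c : I → ℕ := fun i => (η'.filter fun j => B i j ≠ 0).card
  have hc_invariant : ∀ i, c (σ i) = c i :=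
    card_filter_perm_apply σ hη'.perm_apply_mem_iff (fun i j => B i j ≠ 0)
      (fun i j => by rw [hσ])
  have hcard : ((η ×ˢ η').filter fun p => B p.1 p.2 ≠ 0).card = η.card * c i₀ :=
    card_filter_product_eq_mul (fun i j => B i j ≠ 0)
      fun i hi => hη.apply_eq_apply_of_invariant hc_invariant hi hi₀η
  refine ⟨-(c i₀ : ℤ), by omega, ?_⟩
  rw [hB₁off η η' hne, hB₁diag η, hcard]
  push_cast
  ring

/-- folding a simply laced Cartan datum along an admissible
automorphism yields a Cartan datum. -/
theorem stmt2 {I : Type*} [Fintype I] [DecidableEq I]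
    (B : I → I → ℤ)
    (hsymm : ∀ i j, B i j = B j i)
    (hdiag : ∀ i, B i i = 2)
    (hoff : ∀ i j, i ≠ j → B i j = 0 ∨ B i j = -1)
    (σ : Equiv.Perm I)
    (hσ : ∀ i j, B (σ i) (σ j) = B i j)
    (hadm : ∀ i j, i ≠ j → (∃ k : ℕ, (σ ^ k) i = j) → B i j = 0)
    (B₁ : Finset I → Finset I → ℤ)
    (hB₁diag : ∀ η : Finset I, B₁ η η = 2 * η.card)
    (hB₁off : ∀ η η' : Finset I, η ≠ η' →
      B₁ η η' = -(((η ×ˢ η').filter (fun p => B p.1 p.2 ≠ 0)).card : ℤ))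
    (η η' : Finset I) (hη : IsOrbit σ η) (hη' : IsOrbit σ η') :
    (∃ m : ℤ, 0 < m ∧ B₁ η η = 2 * m) ∧
    (η ≠ η' → ∃ m : ℤ, m ≤ 0 ∧ 2 * B₁ η η' = m * B₁ η η) :=
  stmt2_general B σ hσ B₁ hB₁diag hB₁off η η' hη hη'
end

section
/- In the ℚ(q)-algebra generated by f₁, f₂, f_{2'} subject to the A₃ quantum Serre relations (edges 1–2 and 1–2', and f₂f_{2'} = f_{2'}f₂), with f₁₂ = f₁f₂ − q f₂f₁, f₁₂' = f₁f_{2'} − q f_{2'}f₁, the element Z = f₁²f₂f_{2'} − (q²+1) f₁f₂f_{2'}f₁ + q² f₂f_{2'}f₁² equals (q + q⁻¹) f₁₂ f₁₂'. -/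
/-!
Put `[x, y]_q = x y − q y x` and `S(x, y) = y x² − c x y x + x² y`. Expanding, and using only
`q c = q² + 1` (true for `c = q + q⁻¹`), one finds in the free algebra
`Z − c [f₁, f₂]_q [f₁, f₂']_q = S(f₁, f₂) f₂' + q² f₂ S(f₁, f₂')`,
whose right side vanishes by the Serre relations.
-/

/-- The indeterminate `q` in the field `ℚ(q)` of rational functions. -/
noncomputable def qq : RatFunc ℚ := RatFunc.X

section QuantumSerre

variable {R A : Type*} [CommRing R] [Ring A] [Algebra R A]

def qCommutator (q : R) (x y : A) : A := x * y - q • (y * x)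

def serreRel (c : R) (x y : A) : A := y * x ^ 2 - c • (x * y * x) + x ^ 2 * y

theorem sub_smul_qCommutator_mul_qCommutator {q c : R} (hqc : q * c = q ^ 2 + 1) (x y z : A) :
    x ^ 2 * y * z - (q ^ 2 + 1) • (x * y * z * x) + q ^ 2 • (y * z * x ^ 2)
        - c • (qCommutator q x y * qCommutator q x z)
      = serreRel c x y * z + q ^ 2 • (y * serreRel c x z) := by
  simp only [qCommutator, serreRel, pow_two, mul_sub, sub_mul, mul_add, add_mul,
    smul_mul_assoc, mul_smul_comm, smul_sub, smul_add, smul_smul, mul_assoc]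
  match_scalars <;> first | ring1 | linear_combination hqc

theorem eq_smul_qCommutator_mul_qCommutator {q c : R} (hqc : q * c = q ^ 2 + 1) {x y z : A}
    (hy : serreRel c x y = 0) (hz : serreRel c x z = 0) :
    x ^ 2 * y * z - (q ^ 2 + 1) • (x * y * z * x) + q ^ 2 • (y * z * x ^ 2)
      = c • (qCommutator q x y * qCommutator q x z) := by
  rw [← sub_eq_zero, sub_smul_qCommutator_mul_qCommutator hqc, hy, hz]
  simp

end QuantumSerre

theorem qq_mul_add_inv : qq * (qq + qq⁻¹) = qq ^ 2 + 1 := by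
  rw [mul_add, mul_inv_cancel₀ RatFunc.X_ne_zero]
  ring

theorem stmt5_general {A : Type*} [Ring A] [Algebra (RatFunc ℚ) A]
    (f1 f2 f2' : A)
    (h2 : f2 * f1 ^ 2 - (qq + qq⁻¹) • (f1 * f2 * f1) + f1 ^ 2 * f2 = 0)
    (h4 : f2' * f1 ^ 2 - (qq + qq⁻¹) • (f1 * f2' * f1) + f1 ^ 2 * f2' = 0)
    (f12 f12' : A)
    (hf12 : f12 = f1 * f2 - qq • (f2 * f1))
    (hf12' : f12' = f1 * f2' - qq • (f2' * f1)) :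
    f1 ^ 2 * f2 * f2' - (qq ^ 2 + 1) • (f1 * f2 * f2' * f1)
      + qq ^ 2 • (f2 * f2' * f1 ^ 2)
      = (qq + qq⁻¹) • (f12 * f12') := by
  rw [hf12, hf12']
  exact eq_smul_qCommutator_mul_qCommutator qq_mul_add_inv h2 h4

/-- identity (4.3.8) in `U_q⁻` of type A₃ (vertices 2,1,2'):
`Z = f₁²f₂f₂' − (q²+1) f₁f₂f₂'f₁ + q² f₂f₂'f₁² = (q+q⁻¹) f₁₂ f₁₂'`. -/
theorem stmt5 {A : Type*} [Ring A] [Algebra (RatFunc ℚ) A]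
    (f1 f2 f2' : A)
    (h1 : f1 * f2 ^ 2 - (qq + qq⁻¹) • (f2 * f1 * f2) + f2 ^ 2 * f1 = 0)
    (h2 : f2 * f1 ^ 2 - (qq + qq⁻¹) • (f1 * f2 * f1) + f1 ^ 2 * f2 = 0)
    (h3 : f1 * f2' ^ 2 - (qq + qq⁻¹) • (f2' * f1 * f2') + f2' ^ 2 * f1 = 0)
    (h4 : f2' * f1 ^ 2 - (qq + qq⁻¹) • (f1 * f2' * f1) + f1 ^ 2 * f2' = 0)
    (h5 : f2 * f2' = f2' * f2)
    (f12 f12' : A)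
    (hf12 : f12 = f1 * f2 - qq • (f2 * f1))
    (hf12' : f12' = f1 * f2' - qq • (f2' * f1)) :
    f1 ^ 2 * f2 * f2' - (qq ^ 2 + 1) • (f1 * f2 * f2' * f1)
      + qq ^ 2 • (f2 * f2' * f1 ^ 2)
      = (qq + qq⁻¹) • (f12 * f12') :=
  stmt5_general f1 f2 f2' h2 h4 f12 f12' hf12 hf12'
end

section
/- Let F = ℤ/2ℤ and work in the F[q,q⁻¹]-algebra U generated by f₁, f₁', f₂, f₂' subject to quantum Serre relations of type A₂ × A₂ with σ-twist: edges {1,2} and {1',2'}, all other pairs commute. Let σ be the algebra automorphism swapping f₁ ↔ f₁' and f₂ ↔ f₂', let J be the ideal of U^σ generated by elements x + σ(x), and set g₁ = π(f₁f₁'), g₂ = π(f₂f₂') in V = U^σ/J. Then g₁g₂² − (q² + q⁻²)g₂g₁g₂ + g₂²g₁ = 0. -/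
/-!
Write `P = f₁f₂²`, `Q = f₂f₁f₂`, `S = f₂²f₁` and `P', Q', S'` for their primed copies. Since the
two halves commute, the folded Serre element is `PP' - q₂ QQ' + SS'` with `q₂ = (q + q⁻¹)²`
(in characteristic 2 `q² + q⁻² = (q + q⁻¹)²`). Substituting the Serre relations
`P = (q + q⁻¹)Q - S` and `P' = (q + q⁻¹)Q' - S'` leaves `(q + q⁻¹)(QS' + SQ')` modulo 2, and
`SQ' = Q'S = σ(QS')`.
-/

open LaurentPolynomial

namespace LaurentPolynomial

theorem T_one_add_T_neg_one_sq {R : Type*} [CommSemiring R] :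
    (T 1 + T (-1) : R[T;T⁻¹]) ^ 2 = T 2 + 2 + T (-2) := by
  rw [sq, add_mul, mul_add, mul_add, ← T_add, ← T_add, ← T_add, ← T_add]
  norm_num
  ring

end LaurentPolynomial

section Serre

variable {R A : Type*} [CommRing R] [Ring A] [Algebra R A]

def serreElem (c : R) (x y : A) : A :=
  x * y ^ 2 - c • (y * x * y) + y ^ 2 * x

theorem serreElem_mul_mul {x y x' y' : A} (hxy' : Commute x y') (hyx' : Commute y x')
    (hyy' : Commute y y') (c : R) :
    serreElem c (x * x') (y * y') =
      x * y ^ 2 * (x' * y' ^ 2) - c • (y * x * y * (y' * x' * y')) + y ^ 2 * x * (y' ^ 2 * x') := by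
  have hP : x * x' * (y * y') ^ 2 = x * y ^ 2 * (x' * y' ^ 2) := by
    rw [sq, sq, sq, ← mul_assoc, hyx'.symm.mul_mul_mul_comm,
      (hyx'.symm.mul_left hyy'.symm).mul_mul_mul_comm, mul_assoc x, mul_assoc x']
  have hQ : y * y' * (x * x') * (y * y') = y * x * y * (y' * x' * y') := by
    rw [hxy'.symm.mul_mul_mul_comm, (hyy'.symm.mul_left hyx'.symm).mul_mul_mul_comm]
  have hS : (y * y') ^ 2 * (x * x') = y ^ 2 * x * (y' ^ 2 * x') := by
    rw [sq, sq, sq, hyy'.symm.mul_mul_mul_comm,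
      (hxy'.symm.mul_left hxy'.symm).mul_mul_mul_comm]
  rw [serreElem, hP, hQ, hS]

theorem mul_sub_sq_smul_mul_add_mul_of_two_eq_zero (h2 : (2 : A) = 0) {a : R}
    {P Q S P' Q' S' : A} (h : P - a • Q + S = 0) (h' : P' - a • Q' + S' = 0) :
    P * P' - a ^ 2 • (Q * Q') + S * S' = a • (Q * S') + a • (S * Q') := by
  have hP : P = a • Q - S := by rw [← sub_eq_zero, ← h]; abel
  have hP' : P' = a • Q' - S' := by rw [← sub_eq_zero, ← h']; abel
  rw [← sub_eq_zero, hP, hP']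
  calc
    _ = 2 * (S * S' - a • (Q * S') - a • (S * Q')) := by
      simp only [sub_mul, mul_sub, smul_mul_assoc, mul_smul_comm, two_mul, sq]
      module
    _ = 0 := by rw [h2, zero_mul]

end Serre

theorem stmt11_general {U : Type*} [Ring U] [Algebra (LaurentPolynomial (ZMod 2)) U]
    (f1 f2 f1' f2' : U)
    (h1 : f1 * f2 ^ 2 - (T 1 + T (-1) : LaurentPolynomial (ZMod 2)) • (f2 * f1 * f2) + f2 ^ 2 * f1 = 0)
    (h3 : f1' * f2' ^ 2 - (T 1 + T (-1) : LaurentPolynomial (ZMod 2)) • (f2' * f1' * f2') + f2' ^ 2 * f1' = 0)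
    (h5 : f1 * f1' = f1' * f1) (h6 : f1 * f2' = f2' * f1)
    (h7 : f2 * f1' = f1' * f2) (h8 : f2 * f2' = f2' * f2)
    (σ : U ≃ₐ[LaurentPolynomial (ZMod 2)] U)
    (hσ1 : σ f1 = f1') (hσ1' : σ f1' = f1)
    (hσ2 : σ f2 = f2') (hσ2' : σ f2' = f2) :
    ∃ x : U,
      (f1 * f1') * (f2 * f2') ^ 2
        - (T 2 + T (-2) : LaurentPolynomial (ZMod 2)) • ((f2 * f2') * (f1 * f1') * (f2 * f2'))
        + (f2 * f2') ^ 2 * (f1 * f1')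
      = x + σ x := by
  have two_laurent : (2 : (ZMod 2)[T;T⁻¹]) = 0 := by
    rw [← map_ofNat C 2, show (2 : ZMod 2) = 0 from rfl, map_zero]
  have two_U : (2 : U) = 0 := by
    rw [← map_ofNat (algebraMap (ZMod 2)[T;T⁻¹] U) 2, two_laurent, map_zero]
  have q₂_eq : (T 2 + T (-2) : (ZMod 2)[T;T⁻¹]) = (T 1 + T (-1)) ^ 2 := by
    rw [T_one_add_T_neg_one_sq, two_laurent, add_zero]
  have hSQ' : Commute (f2 ^ 2 * f1) (f2' * f1' * f2') := by
    replace h5 : Commute f1 f1' := h5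
    replace h6 : Commute f1 f2' := h6
    replace h7 : Commute f2 f1' := h7
    replace h8 : Commute f2 f2' := h8
    exact ((h8.mul_right h7).mul_right h8).pow_left 2 |>.mul_left ((h6.mul_right h5).mul_right h6)
  refine ⟨(T 1 + T (-1) : (ZMod 2)[T;T⁻¹]) • (f2 * f1 * f2 * (f2' ^ 2 * f1')), ?_⟩
  simp only [map_smul, map_mul, map_pow, hσ1, hσ1', hσ2, hσ2']
  rw [← hSQ'.eq]
  change serreElem _ (f1 * f1') (f2 * f2') = _
  rw [serreElem_mul_mul h6 h7 h8, q₂_eq]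
  exact mul_sub_sq_smul_mul_add_mul_of_two_eq_zero two_U h1 h3

/-- folding of type A₂ × A₂ over `𝔽₂[q,q⁻¹]`.  With
`g₁ = π(f₁f₁')`, `g₂ = π(f₂f₂')` in `V = U^σ/J`, the q²-Serre relation
`g₁g₂² − (q²+q⁻²) g₂g₁g₂ + g₂²g₁ = 0` holds, i.e. the corresponding element of
`U^σ` lies in `J = {x + σ(x) : x ∈ U}`. -/
theorem stmt11 {U : Type*} [Ring U] [Algebra (LaurentPolynomial (ZMod 2)) U]
    (f1 f2 f1' f2' : U)
    (h1 : f1 * f2 ^ 2 - (T 1 + T (-1) : LaurentPolynomial (ZMod 2)) • (f2 * f1 * f2) + f2 ^ 2 * f1 = 0)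
    (h2 : f2 * f1 ^ 2 - (T 1 + T (-1) : LaurentPolynomial (ZMod 2)) • (f1 * f2 * f1) + f1 ^ 2 * f2 = 0)
    (h3 : f1' * f2' ^ 2 - (T 1 + T (-1) : LaurentPolynomial (ZMod 2)) • (f2' * f1' * f2') + f2' ^ 2 * f1' = 0)
    (h4 : f2' * f1' ^ 2 - (T 1 + T (-1) : LaurentPolynomial (ZMod 2)) • (f1' * f2' * f1') + f1' ^ 2 * f2' = 0)
    (h5 : f1 * f1' = f1' * f1) (h6 : f1 * f2' = f2' * f1)
    (h7 : f2 * f1' = f1' * f2) (h8 : f2 * f2' = f2' * f2)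
    (σ : U ≃ₐ[LaurentPolynomial (ZMod 2)] U)
    (hσ1 : σ f1 = f1') (hσ1' : σ f1' = f1)
    (hσ2 : σ f2 = f2') (hσ2' : σ f2' = f2) :
    ∃ x : U,
      (f1 * f1') * (f2 * f2') ^ 2
        - (T 2 + T (-2) : LaurentPolynomial (ZMod 2)) • ((f2 * f2') * (f1 * f1') * (f2 * f2'))
        + (f2 * f2') ^ 2 * (f1 * f1')
      = x + σ x :=
  stmt11_general f1 f2 f1' f2' h1 h3 h5 h6 h7 h8 σ hσ1 hσ1' hσ2 hσ2'
end

section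
/- Let F = ℤ/2ℤ and let U be the F[q,q⁻¹]-algebra presented as U_q⁻ of type A₃ with vertex set {2,1,2'} (edges 1–2 and 1–2', f₂f₂' = f₂'f₂). Let σ swap f₂ ↔ f₂' and fix f₁, let J = {x + σ(x)} ⊆ U^σ, π : U^σ → U^σ/J, g₁ = π(f₁), g₂ = π(f₂f₂'). Then g₁g₂² − (q² + q⁻²)g₂g₁g₂ + g₂²g₁ = 0 and g₂g₁³ − (q²+1+q⁻²)g₁g₂g₁² + (q²+1+q⁻²)g₁²g₂g₁ − g₁³g₂ = 0 hold in U^σ/J; i.e., g₁, g₂ satisfy the type B₂ quantum Serre relations. -/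
/-!
With `a = q + q⁻¹` one has `q² + q⁻² = a² - 2` and `[3]_q = a² - 1`, and both relations hold
for the product `y y'` of any two elements satisfying the type A Serre relations with `x`.
The cubic one holds exactly, even without `y y' = y' y`: rewrite the factors `y x²` and
`y' x²` by the Serre relations until none is left. In the quadratic one, rewriting `x y²` and
`x y'²` (using `y y' = y' y`) leaves
`2 (yy'xyy' + (yy')²x) - a (yy'²xy + y²y'xy')`, which is `z + σ z` for
`z = yy'xyy' + (yy')²x - a y²y'xy'`.
-/

section

variable {R U : Type*} [CommRing R] [Ring U] [Algebra R U]

def IsSerre (a : R) (x y : U) : Prop :=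
  x * y ^ 2 - a • (y * x * y) + y ^ 2 * x = 0

theorem IsSerre.exists_mul_eq_add_apply {a : R} {x y y' : U} (hy : IsSerre a x y)
    (hy' : IsSerre a x y') (hc : Commute y y') (σ : U ≃ₐ[R] U)
    (hσx : σ x = x) (hσy : σ y = y') (hσy' : σ y' = y) :
    ∃ z : U, x * (y * y') ^ 2 - (a ^ 2 - 2) • ((y * y') * x * (y * y')) + (y * y') ^ 2 * x
      = z + σ z := by
  refine ⟨(y * y') * x * (y * y') + (y * y') ^ 2 * x - a • (y ^ 2 * y' * x * y'), ?_⟩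
  simp only [map_add, map_sub, map_mul, map_pow, map_smul, hσx, hσy, hσy']
  rw [← hc.eq, ← (hc.pow_right 2).eq, hc.mul_pow]
  unfold IsSerre at hy hy'
  linear_combination (norm := skip)
    hy * y' ^ 2 + a • (y * x * (hc.pow_right 2).eq) + a • (y * hy' * y)
      - a ^ 2 • (y * y' * x * hc.eq) - y ^ 2 * hy'
  simp only [mul_add, add_mul, mul_sub, sub_mul, smul_mul_assoc, mul_smul_comm, mul_assoc,
    pow_succ, pow_zero, one_mul, zero_mul, mul_zero]
  module

theorem IsSerre.cubic_mul {a : R} {x y y' : U} (hy : IsSerre a y x) (hy' : IsSerre a y' x) :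
    (y * y') * x ^ 3 - (a ^ 2 - 1) • (x * (y * y') * x ^ 2)
      + (a ^ 2 - 1) • (x ^ 2 * (y * y') * x) - x ^ 3 * (y * y') = 0 := by
  unfold IsSerre at hy hy'
  linear_combination (norm := skip)
    y * hy' * x + a • (y * x * hy') + (a ^ 2 - 1) • (hy * y' * x) - a • (hy * x * y')
      - x * hy * y' - (a ^ 2 - 1) • (x * y * hy')
  simp only [mul_add, add_mul, mul_sub, sub_mul, smul_mul_assoc, mul_smul_comm, mul_assoc,
    pow_succ, pow_zero, one_mul, zero_mul, mul_zero, Nat.cast_one]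
  module

end

open LaurentPolynomial

/-- folding of type A₃ (vertices 2,1,2') over `𝔽₂[q,q⁻¹]`.
With `g₁ = π(f₁)`, `g₂ = π(f₂f₂')` in `U^σ/J`, `g₁,g₂` satisfy the type B₂
quantum Serre relations, i.e. the corresponding elements of `U^σ` lie in
`J = {x + σ(x) : x ∈ U}`. -/
theorem stmt12 {U : Type*} [Ring U] [Algebra (LaurentPolynomial (ZMod 2)) U]
    (f1 f2 f2' : U)
    (h1 : f1 * f2 ^ 2 - (T 1 + T (-1) : LaurentPolynomial (ZMod 2)) • (f2 * f1 * f2) + f2 ^ 2 * f1 = 0)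
    (h2 : f2 * f1 ^ 2 - (T 1 + T (-1) : LaurentPolynomial (ZMod 2)) • (f1 * f2 * f1) + f1 ^ 2 * f2 = 0)
    (h3 : f1 * f2' ^ 2 - (T 1 + T (-1) : LaurentPolynomial (ZMod 2)) • (f2' * f1 * f2') + f2' ^ 2 * f1 = 0)
    (h4 : f2' * f1 ^ 2 - (T 1 + T (-1) : LaurentPolynomial (ZMod 2)) • (f1 * f2' * f1) + f1 ^ 2 * f2' = 0)
    (h5 : f2 * f2' = f2' * f2)
    (σ : U ≃ₐ[LaurentPolynomial (ZMod 2)] U)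
    (hσ1 : σ f1 = f1) (hσ2 : σ f2 = f2') (hσ2' : σ f2' = f2) :
    (∃ x : U,
      f1 * (f2 * f2') ^ 2
        - (T 2 + T (-2) : LaurentPolynomial (ZMod 2)) • ((f2 * f2') * f1 * (f2 * f2'))
        + (f2 * f2') ^ 2 * f1
      = x + σ x) ∧
    (∃ x : U,
      (f2 * f2') * f1 ^ 3
        - (T 2 + 1 + T (-2) : LaurentPolynomial (ZMod 2)) • (f1 * (f2 * f2') * f1 ^ 2)
        + (T 2 + 1 + T (-2) : LaurentPolynomial (ZMod 2)) • (f1 ^ 2 * (f2 * f2') * f1)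
        - f1 ^ 3 * (f2 * f2')
      = x + σ x) := by
  set a : LaurentPolynomial (ZMod 2) := T 1 + T (-1)
  have ha : a ^ 2 = T 2 + 2 + T (-2) := by
    simp only [a, sq, add_mul, mul_add, ← T_add]
    norm_num
    ring
  rw [show T 2 + T (-2) = a ^ 2 - 2 by rw [ha]; ring,
    show T 2 + 1 + T (-2) = a ^ 2 - 1 by rw [ha]; ring]
  exact ⟨IsSerre.exists_mul_eq_add_apply h1 h3 h5 σ hσ1 hσ2 hσ2',
    0, by rw [map_zero, add_zero]; exact IsSerre.cubic_mul h2 h4⟩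
end

section
/- In U_q⁻ of type D₄ over ℚ(q), let f₁₂₂'₂'' and f₁₁₂₂'₂'' := f₁₂''f₁₂₂' − q f₁₂₂' f₁₂'' be root vectors (with f₁₂ⱼ as iterated q-brackets as usual). Then f₁ f₁₁₂₂'₂'' = q⁻¹ f₁₁₂₂'₂'' f₁ + (q − q⁻¹)² f₁₂ f₁₂' f₁₂''. -/
theorem RatFunc.one_add_X_sq_ne_zero {K : Type*} [Field K] : (1 : RatFunc K) + X ^ 2 ≠ 0 := by
  simpa [add_comm] using
    RatFunc.algebraMap_ne_zero (Polynomial.X_pow_add_C_ne_zero two_pos (1 : K))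

section QCommutator

variable {K A : Type*} [Field K] [Ring A] [Algebra K A]

def qComm (q : K) (a b : A) : A := a * b - q • (b * a)

variable {q : K}

theorem mul_qComm_of_serre (hq : q ≠ 0) {u x : A}
    (h : x * u ^ 2 - (q + q⁻¹) • (u * x * u) + u ^ 2 * x = 0) :
    u * qComm q u x = q⁻¹ • (qComm q u x * u) := by
  linear_combination (norm := skip) h
  simp only [qComm, mul_sub, sub_mul, smul_mul_assoc, mul_smul_comm, pow_two, mul_assoc]
  match_scalars <;> field_simp <;> ring

theorem qComm_mul_qComm_comm_of_serre (hq : q ≠ 0) (hq2 : 1 + q ^ 2 ≠ 0) {u x y : A}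
    (hx : x * u ^ 2 - (q + q⁻¹) • (u * x * u) + u ^ 2 * x = 0)
    (hy : y * u ^ 2 - (q + q⁻¹) • (u * y * u) + u ^ 2 * y = 0)
    (hxy : x * y = y * x) :
    qComm q u x * qComm q u y = qComm q u y * qComm q u x := by
  have key : (1 + q ^ 2) • (qComm q u x * qComm q u y)
      = (1 + q ^ 2) • (qComm q u y * qComm q u x) := by
    linear_combination (norm := skip)
      (-q) • (hx * y) + q ^ 3 • (y * hx) + q • (hy * x) - q ^ 3 • (x * hy)
        + q ^ 3 • (hxy * u * u) - (q * (1 + q ^ 2)) • (u * hxy * u) + q • (u * u * hxy)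
    simp only [qComm, mul_sub, sub_mul, mul_add, add_mul, smul_mul_assoc, mul_smul_comm,
      smul_sub, smul_add, pow_two, mul_assoc, zero_mul, mul_zero, smul_zero]
    match_scalars <;> field_simp <;> ring
  exact smul_right_injective A hq2 key

theorem mul_qComm_of_mul_eq_smul (hq : q ≠ 0) {u B c : A} (hB : u * B = q⁻¹ • (B * u)) :
    u * qComm q B c
      = qComm q B c * u + q⁻¹ • (B * qComm q u c) - q • (qComm q u c * B) := by
  linear_combination (norm := skip) hB * c - q ^ 2 • (c * hB)
  simp only [qComm, mul_sub, sub_mul, smul_mul_assoc, mul_smul_comm, pow_two, mul_assoc]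
  match_scalars <;> field_simp <;> ring

theorem mul_qComm_of_mul_eq_smul_of_commute (hq : q ≠ 0) {a B C D F : A}
    (hD : a * D = q⁻¹ • (D * a)) (hF : a * F = F * a + q⁻¹ • (B * C) - q • (C * B))
    (hBC : B * C = C * B) (hBD : B * D = D * B) (hCD : C * D = D * C) :
    a * qComm q D F = q⁻¹ • (qComm q D F * a) + (q - q⁻¹) ^ 2 • (B * C * D) := by
  linear_combination (norm := skip)
    hD * F - q • (F * hD) + q⁻¹ • (D * hF) - q • (hF * D) - (q ^ 2)⁻¹ • (hBD * C)
      - (q ^ 2)⁻¹ • (B * hCD) + C * hBD + hCD * B + (1 - q ^ 2) • (hBC * D)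
  simp only [qComm, mul_sub, sub_mul, mul_add, add_mul, smul_mul_assoc, mul_smul_comm, smul_sub,
    smul_add, pow_two, mul_assoc]
  match_scalars <;> field_simp <;> ring

end QCommutator

theorem stmt16_general {A : Type*} [Ring A] [Algebra (RatFunc ℚ) A]
    (f1 f2 f2' f2'' : A)
    (h2 : f2 * f1 ^ 2 - (qq + qq⁻¹) • (f1 * f2 * f1) + f1 ^ 2 * f2 = 0)
    (h4 : f2' * f1 ^ 2 - (qq + qq⁻¹) • (f1 * f2' * f1) + f1 ^ 2 * f2' = 0)
    (h6 : f2'' * f1 ^ 2 - (qq + qq⁻¹) • (f1 * f2'' * f1) + f1 ^ 2 * f2'' = 0)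
    (h7 : f2 * f2' = f2' * f2) (h8 : f2 * f2'' = f2'' * f2)
    (h9 : f2' * f2'' = f2'' * f2')
    (f12 f12' f12'' f122' f1122'2'' : A)
    (hf12 : f12 = f1 * f2 - qq • (f2 * f1))
    (hf12' : f12' = f1 * f2' - qq • (f2' * f1))
    (hf12'' : f12'' = f1 * f2'' - qq • (f2'' * f1))
    (hf122' : f122' = f12 * f2' - qq • (f2' * f12))
    (hf1122'2'' : f1122'2'' = f12'' * f122' - qq • (f122' * f12'')) :
    f1 * f1122'2''
      = qq⁻¹ • (f1122'2'' * f1) + ((qq - qq⁻¹) ^ 2) • (f12 * f12' * f12'') := by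
  have hq : qq ≠ 0 := RatFunc.X_ne_zero
  have hq2 : 1 + qq ^ 2 ≠ 0 := RatFunc.one_add_X_sq_ne_zero
  subst hf12 hf12' hf12'' hf122' hf1122'2''
  exact mul_qComm_of_mul_eq_smul_of_commute hq (mul_qComm_of_serre hq h6)
    (mul_qComm_of_mul_eq_smul hq (mul_qComm_of_serre hq h2))
    (qComm_mul_qComm_comm_of_serre hq hq2 h2 h4 h7)
    (qComm_mul_qComm_comm_of_serre hq hq2 h2 h6 h8)
    (qComm_mul_qComm_comm_of_serre hq hq2 h4 h6 h9)

/-- identity (3.5.9) in `U_q⁻` of type D₄: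
`f₁ f₁₁₂₂'₂'' = q⁻¹ f₁₁₂₂'₂'' f₁ + (q − q⁻¹)² f₁₂ f₁₂' f₁₂''`. -/
theorem stmt16 {A : Type*} [Ring A] [Algebra (RatFunc ℚ) A]
    (f1 f2 f2' f2'' : A)
    (h1 : f1 * f2 ^ 2 - (qq + qq⁻¹) • (f2 * f1 * f2) + f2 ^ 2 * f1 = 0)
    (h2 : f2 * f1 ^ 2 - (qq + qq⁻¹) • (f1 * f2 * f1) + f1 ^ 2 * f2 = 0)
    (h3 : f1 * f2' ^ 2 - (qq + qq⁻¹) • (f2' * f1 * f2') + f2' ^ 2 * f1 = 0)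
    (h4 : f2' * f1 ^ 2 - (qq + qq⁻¹) • (f1 * f2' * f1) + f1 ^ 2 * f2' = 0)
    (h5 : f1 * f2'' ^ 2 - (qq + qq⁻¹) • (f2'' * f1 * f2'') + f2'' ^ 2 * f1 = 0)
    (h6 : f2'' * f1 ^ 2 - (qq + qq⁻¹) • (f1 * f2'' * f1) + f1 ^ 2 * f2'' = 0)
    (h7 : f2 * f2' = f2' * f2) (h8 : f2 * f2'' = f2'' * f2)
    (h9 : f2' * f2'' = f2'' * f2')
    (f12 f12' f12'' f122' f122'2'' f1122'2'' : A)
    (hf12 : f12 = f1 * f2 - qq • (f2 * f1))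
    (hf12' : f12' = f1 * f2' - qq • (f2' * f1))
    (hf12'' : f12'' = f1 * f2'' - qq • (f2'' * f1))
    (hf122' : f122' = f12 * f2' - qq • (f2' * f12))
    (hf122'2'' : f122'2'' = f122' * f2'' - qq • (f2'' * f122'))
    (hf1122'2'' : f1122'2'' = f12'' * f122' - qq • (f122' * f12'')) :
    f1 * f1122'2''
      = qq⁻¹ • (f1122'2'' * f1) + ((qq - qq⁻¹) ^ 2) • (f12 * f12' * f12'') :=
  stmt16_general f1 f2 f2' f2'' h2 h4 h6 h7 h8 h9 f12 f12' f12'' f122' f1122'2'' hf12 hf12' hf12''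
    hf122' hf1122'2''
end
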